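/- Let α > -1 and β ∈ ℝ, and set ρ_{α,β} = α+β+1. For λ real with λ ≠ 0, the function Ψ_λ^{α,β}(t) = (2 sinh t)^{iλ-ρ_{α,β}} ₂F₁((ρ_{α,β}-iλ)/2, (β-α+1-iλ)/2; 1-iλ; -1/sinh²t) satisfies: there exists C > 0 such that for all t ≥ 1, Ψ_λ^{α,β}(t) = e^{(iλ-ρ_{α,β})t}(1 + e^{-2t}Θ_λ(t)) with |Θ_λ(t)| ≤ C. -/

import Mathlib

/-- The Gauss hypergeometric function `₂F₁(a,b;c;z) = Σ (a)_k (b)_k / ((c)_k k!) z^k`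
(interpreted by its series / analytic continuation). -/
noncomputable def F21 (a b c z : ℂ) : ℂ :=
  ∑' k : ℕ, (Polynomial.eval a (ascPochhammer ℂ k) *
      Polynomial.eval b (ascPochhammer ℂ k) /
        (Polynomial.eval c (ascPochhammer ℂ k) * (k.factorial : ℂ))) * z ^ k

/-- The second Jacobi solution
`Ψ_λ^(α,β)(t) = (2 sinh t)^(iλ-ρ_{α,β}) ₂F₁((ρ_{α,β}-iλ)/2, (β-α+1-iλ)/2; 1-iλ; -1/sinh²t)`
with `ρ_{α,β} = α+β+1`. -/
noncomputable def PsiJac (α β : ℝ) (lam : ℂ) (t : ℝ) : ℂ :=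
  ((2 * Real.sinh t : ℝ) : ℂ) ^ (Complex.I * lam - ((α : ℂ) + β + 1)) *
    F21 ((((α : ℂ) + β + 1) - Complex.I * lam) / 2)
      (((β : ℂ) - α + 1 - Complex.I * lam) / 2) (1 - Complex.I * lam)
      (-(1 / ((Real.sinh t : ℂ)) ^ 2))

/-!
With `x = e^{-2t}` one has `2 sinh t = e^t (1 - x)`, so
`Ψ_λ(t) e^{-(iλ-ρ)t} = (1 - x)^{iλ-ρ} ₂F₁(a, b; c; z)` with `z = -1/sinh² t`.
The prefactor is `1 + O(x)` because `|log (1 - x)| ≤ 2x`. For `t ≥ 1` the argument `z` has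
`|z| ≤ 16x` and stays in the disc of radius `1/sinh² 1 < 1`, strictly inside the disc of
convergence of the hypergeometric series, where `₂F₁ = 1 + O(|z|)` uniformly.
-/

open scoped NNReal ENNReal

theorem HasFPowerSeriesOnBall.exists_norm_image_sub_le_mul_norm
    {𝕜 E F : Type*} [NontriviallyNormedField 𝕜] [NormedAddCommGroup E] [NormedSpace 𝕜 E]
    [NormedAddCommGroup F] [NormedSpace 𝕜 F]
    {f : E → F} {p : FormalMultilinearSeries 𝕜 E F} {x : E} {r : ℝ≥0∞}
    (hf : HasFPowerSeriesOnBall f p x r) {q : ℝ≥0} (hq : (q : ℝ≥0∞) < r) :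
    ∃ C > 0, ∀ y : E, ‖y‖ ≤ q → ‖f (x + y) - f x‖ ≤ C * ‖y‖ := by
  obtain ⟨r', hqr', hr'r⟩ := ENNReal.lt_iff_exists_nnreal_btwn.1 hq
  have hr' : (0 : ℝ) < r' := lt_of_le_of_lt q.2 (by exact_mod_cast hqr')
  obtain ⟨a, ha, C, hC, happrox⟩ := hf.uniform_geometric_approx' hr'r
  refine ⟨C * a / r', div_pos (mul_pos hC ha.1) hr', fun y hy => ?_⟩
  have h := happrox y (mem_ball_zero_iff.2 (hy.trans_lt (by exact_mod_cast hqr'))) 1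
  rw [FormalMultilinearSeries.partialSum, Finset.sum_range_one, hf.coeff_zero, pow_one] at h
  calc ‖f (x + y) - f x‖ ≤ C * (a * (‖y‖ / r')) := h
    _ = C * a / r' * ‖y‖ := by ring

section Hypergeometric

variable {𝕂 : Type*} (𝔸 : Type*) [RCLike 𝕂] [NormedDivisionRing 𝔸] [NormedAlgebra 𝕂 𝔸]

-- If a parameter is a non-positive integer the series terminates (for `c` through the junk
-- value `0⁻¹ = 0`), so the radius is `⊤`.
theorem one_le_radius_ordinaryHypergeometricSeries (a b c : 𝕂) :
    1 ≤ (ordinaryHypergeometricSeries 𝔸 a b c).radius := by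
  by_cases habc : ∀ k : ℕ, (k : 𝕂) ≠ -a ∧ (k : 𝕂) ≠ -b ∧ (k : 𝕂) ≠ -c
  · exact (ordinaryHypergeometricSeries_radius_eq_one 𝔸 a b c habc).ge
  · obtain ⟨k, hk⟩ : ∃ k : ℕ, a = -k ∨ b = -k ∨ c = -k := by
      simp only [not_forall] at habc
      obtain ⟨k, hk⟩ := habc
      exact ⟨k, by grind⟩
    rcases hk with rfl | rfl | rfl
    · simp [ordinaryHypergeometric_radius_top_of_neg_nat₁]
    · simp [ordinaryHypergeometric_radius_top_of_neg_nat₂]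
    · simp [ordinaryHypergeometric_radius_top_of_neg_nat₃]

variable [CompleteSpace 𝔸]

theorem exists_norm_ordinaryHypergeometric_sub_one_le (a b c : 𝕂) {q : ℝ} (hq : q < 1) :
    ∃ M > 0, ∀ z : 𝔸, ‖z‖ ≤ q → ‖₂F₁ a b c z - 1‖ ≤ M * ‖z‖ := by
  set p := ordinaryHypergeometricSeries 𝔸 a b c
  have hradius : 1 ≤ p.radius := one_le_radius_ordinaryHypergeometricSeries 𝔸 a b c
  have hq' : ((Real.toNNReal q : ℝ≥0) : ℝ≥0∞) < p.radius :=
    lt_of_lt_of_le (by simpa using hq) hradius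
  obtain ⟨M, hM, hbound⟩ :=
    (p.hasFPowerSeriesOnBall (zero_lt_one.trans_le hradius)).exists_norm_image_sub_le_mul_norm hq'
  refine ⟨M, hM, fun z hz => ?_⟩
  have h := hbound z (hz.trans (Real.le_coe_toNNReal q))
  rwa [zero_add, show p.sum 0 = 1 from ordinaryHypergeometric_zero a b c] at h

end Hypergeometric

theorem F21_eq_ordinaryHypergeometric (a b c z : ℂ) : F21 a b c z = ₂F₁ a b c z := by
  rw [ordinaryHypergeometric_eq_tsum, F21]
  congr! 2 with k
  simp only [smul_eq_mul]
  ring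

namespace Real

theorem abs_log_one_sub_le {x : ℝ} (hx0 : 0 ≤ x) (hx : x ≤ 1 / 2) :
    |log (1 - x)| ≤ 2 * x := by
  have hpos : 0 < 1 - x := by linarith
  have hlower : 1 - (1 - x)⁻¹ ≤ log (1 - x) := one_sub_inv_le_log_of_pos hpos
  have hfrac : (1 - x)⁻¹ - 1 ≤ 2 * x := by
    rw [inv_eq_one_div, div_sub_one hpos.ne', div_le_iff₀ hpos]
    nlinarith
  rw [abs_of_nonpos (log_nonpos (by linarith) (by linarith))]
  linarith

theorem exp_neg_two_mul_le_half {t : ℝ} (ht : 1 ≤ t) : exp (-2 * t) ≤ 1 / 2 := by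
  have h3 : 3 ≤ exp 2 := by linarith [add_one_le_exp 2]
  have : exp (-2 * t) ≤ exp (-2) := exp_le_exp.2 (by linarith)
  rw [exp_neg] at this
  calc exp (-2 * t) ≤ (exp 2)⁻¹ := this
    _ ≤ 1 / 2 := by rw [inv_eq_one_div]; gcongr; linarith

theorem two_sinh_eq (t : ℝ) : 2 * sinh t = exp t * (1 - exp (-2 * t)) := by
  rw [sinh_eq, mul_sub, mul_one, ← exp_add]
  ring_nf

theorem one_div_sinh_sq_le {t : ℝ} (ht : 1 ≤ t) : 1 / sinh t ^ 2 ≤ 16 * exp (-2 * t) := by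
  have hx := exp_neg_two_mul_le_half ht
  have hsinh : exp t / 4 ≤ sinh t := by
    have := mul_le_mul_of_nonneg_left hx (exp_pos t).le
    linarith [two_sinh_eq t, exp_pos t]
  have hexp : exp (-2 * t) = 1 / (exp t) ^ 2 := by
    rw [← exp_nat_mul, one_div, ← exp_neg]
    congr 1
    push_cast
    ring
  rw [hexp, mul_one_div, div_le_div_iff₀ (by nlinarith [exp_pos t]) (by positivity)]
  nlinarith [exp_pos t]

end Real

theorem Complex.norm_exp_log_one_sub_mul_sub_one_le (s : ℂ) {x : ℝ} (hx0 : 0 ≤ x)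
    (hx : x ≤ 1 / 2) :
    ‖exp (Real.log (1 - x) * s) - 1‖ ≤ 2 * ‖s‖ * Real.exp ‖s‖ * x := by
  have hw : ‖(Real.log (1 - x) : ℂ) * s‖ ≤ 2 * x * ‖s‖ := by
    rw [norm_mul, norm_real, Real.norm_eq_abs]
    gcongr
    exact Real.abs_log_one_sub_le hx0 hx
  have hw1 : ‖(Real.log (1 - x) : ℂ) * s‖ ≤ ‖s‖ :=
    hw.trans (by nlinarith [norm_nonneg s])
  have h := norm_exp_sub_sum_le_norm_mul_exp ((Real.log (1 - x) : ℂ) * s) 1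
  rw [Finset.sum_range_one, pow_zero, Nat.factorial_zero, Nat.cast_one, div_one, pow_one] at h
  calc _ ≤ _ := h
    _ ≤ 2 * x * ‖s‖ * Real.exp ‖s‖ := by gcongr
    _ = _ := by ring

theorem ofReal_two_sinh_cpow_mul_exp (s : ℂ) {t : ℝ} (ht : 0 < t) :
    ((2 * Real.sinh t : ℝ) : ℂ) ^ s * Complex.exp (-(s * t)) =
      Complex.exp (Real.log (1 - Real.exp (-2 * t)) * s) := by
  have h1x : 0 < 1 - Real.exp (-2 * t) := by
    rw [sub_pos, Real.exp_lt_one_iff]; linarith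
  have h2sinh : 0 < 2 * Real.sinh t := by positivity
  rw [Complex.cpow_def_of_ne_zero (by exact_mod_cast h2sinh.ne'), ← Complex.exp_add,
    ← Complex.ofReal_log h2sinh.le, Real.two_sinh_eq, Real.log_mul (Real.exp_ne_zero t) h1x.ne',
    Real.log_exp]
  push_cast
  ring_nf

theorem norm_neg_one_div_sinh_sq_le {t : ℝ} (ht : 1 ≤ t) :
    ‖-(1 / (Real.sinh t : ℂ) ^ 2)‖ ≤ 1 / Real.sinh 1 ^ 2 ∧
      ‖-(1 / (Real.sinh t : ℂ) ^ 2)‖ ≤ 16 * Real.exp (-2 * t) := by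
  rw [norm_neg, norm_div, norm_one, norm_pow, Complex.norm_real, Real.norm_eq_abs, sq_abs]
  refine ⟨?_, Real.one_div_sinh_sq_le ht⟩
  have hsinh := Real.sinh_le_sinh.2 ht
  gcongr

theorem exists_norm_F21_neg_one_div_sinh_sq_sub_one_le (a b c : ℂ) :
    ∃ M > 0, ∀ t : ℝ, 1 ≤ t →
      ‖F21 a b c (-(1 / (Real.sinh t : ℂ) ^ 2)) - 1‖ ≤ M * Real.exp (-2 * t) := by
  have hq : 1 / Real.sinh 1 ^ 2 < 1 := by
    have := Real.self_lt_sinh_iff.2 one_pos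
    rw [div_lt_one (by positivity)]
    nlinarith
  obtain ⟨M, hM, hF⟩ := exists_norm_ordinaryHypergeometric_sub_one_le ℂ a b c hq
  refine ⟨16 * M, by positivity, fun t ht => ?_⟩
  obtain ⟨hzq, hzx⟩ := norm_neg_one_div_sinh_sq_le ht
  rw [F21_eq_ordinaryHypergeometric, mul_comm 16 M, mul_assoc]
  exact (hF _ hzq).trans (by gcongr)

theorem norm_mul_sub_one_le {𝕜 : Type*} [NormedRing 𝕜] [NormOneClass 𝕜] (p f : 𝕜) :
    ‖p * f - 1‖ ≤ ‖p - 1‖ * (1 + ‖f - 1‖) + ‖f - 1‖ := by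
  calc ‖p * f - 1‖ = ‖(p - 1) * (1 + (f - 1)) + (f - 1)‖ := by noncomm_ring
    _ ≤ ‖p - 1‖ * ‖1 + (f - 1)‖ + ‖f - 1‖ := norm_add_le_of_le (norm_mul_le _ _) le_rfl
    _ ≤ ‖p - 1‖ * (1 + ‖f - 1‖) + ‖f - 1‖ := by
      gcongr
      exact (norm_add_le _ _).trans_eq (by rw [norm_one])

theorem stmt13_general (α β : ℝ) (lam : ℝ) :
    ∃ C > (0:ℝ), ∀ t : ℝ, 1 ≤ t →
      ‖PsiJac α β (lam : ℂ) t *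
          Complex.exp (-((Complex.I * lam - ((α : ℂ) + β + 1)) * t)) - 1‖ ≤
        C * Real.exp (-2 * t) := by
  set s : ℂ := Complex.I * lam - ((α : ℂ) + β + 1)
  obtain ⟨M, hM, hF⟩ := exists_norm_F21_neg_one_div_sinh_sq_sub_one_le
    ((((α : ℂ) + β + 1) - Complex.I * lam) / 2) (((β : ℂ) - α + 1 - Complex.I * lam) / 2)
    (1 - Complex.I * lam)
  set K := 2 * ‖s‖ * Real.exp ‖s‖
  refine ⟨K * (1 + M) + M, by positivity, fun t ht => ?_⟩
  have hx : Real.exp (-2 * t) ≤ 1 / 2 := Real.exp_neg_two_mul_le_half ht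
  have hP := Complex.norm_exp_log_one_sub_mul_sub_one_le s (Real.exp_nonneg _) hx
  have hFt := hF t ht
  have hF1 := hFt.trans (show M * Real.exp (-2 * t) ≤ M by nlinarith)
  rw [PsiJac, mul_right_comm, ofReal_two_sinh_cpow_mul_exp s (by linarith)]
  calc _ ≤ _ := norm_mul_sub_one_le _ _
    _ ≤ K * Real.exp (-2 * t) * (1 + M) + M * Real.exp (-2 * t) := by gcongr
    _ = _ := by ring

/-- For `α > -1`, `β ∈ ℝ`, `λ` real nonzero: there is `C > 0` such that for `t ≥ 1`,
`Ψ_λ^(α,β)(t) = e^((iλ-ρ_{α,β})t)(1 + e^(-2t) Θ_λ(t))` with `|Θ_λ(t)| ≤ C`. -/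
theorem stmt13 (α β : ℝ) (hα : -1 < α) (lam : ℝ) (hlam : lam ≠ 0) :
    ∃ C > (0:ℝ), ∀ t : ℝ, 1 ≤ t →
      ‖PsiJac α β (lam : ℂ) t *
          Complex.exp (-((Complex.I * lam - ((α : ℂ) + β + 1)) * t)) - 1‖ ≤
        C * Real.exp (-2 * t) :=
  stmt13_general α β lam
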